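/- Define λ as given. Then: (i) λ(Z) < 0 for every real Z ≠ 0; (ii) λ''(Z) < 0 for every real Z ≠ 0; and (iii) λ (extended arbitrarily at 0) is both Lebesgue-integrable and square-integrable on ℝ. -/

import Mathlib

open MeasureTheory

/-- The two-body kernel `λ(Z) = (1/2)·log((e^Z − 1)²/(e^{2Z} + e^Z + 1))`. -/
noncomputable def lam (Z : ℝ) : ℝ :=
  (1 / 2) * Real.log ((Real.exp Z - 1) ^ 2 / (Real.exp (2 * Z) + Real.exp Z + 1))

namespace Conifold

open Real Set

lemma D_pos (Z : ℝ) : 0 < Real.exp (2 * Z) + Real.exp Z + 1 := by positivity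

lemma exp_sub_one_ne {Z : ℝ} (hZ : Z ≠ 0) : Real.exp Z - 1 ≠ 0 := by
  simpa [sub_eq_zero, Real.exp_eq_one_iff] using hZ

lemma N_pos {Z : ℝ} (hZ : Z ≠ 0) : 0 < (Real.exp Z - 1) ^ 2 := by
  have h := exp_sub_one_ne hZ
  positivity

lemma exp_two_mul' (Z : ℝ) : Real.exp (2 * Z) = Real.exp Z * Real.exp Z := by
  rw [two_mul, Real.exp_add]

lemma ratio_lt_one {Z : ℝ} : (Real.exp Z - 1) ^ 2 / (Real.exp (2 * Z) + Real.exp Z + 1) < 1 := by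
  rw [div_lt_one (D_pos Z), exp_two_mul']
  nlinarith [Real.exp_pos Z]

lemma lam_neg {Z : ℝ} (hZ : Z ≠ 0) : lam Z < 0 := by
  have h := Real.log_neg (div_pos (N_pos hZ) (D_pos Z)) (ratio_lt_one (Z := Z))
  unfold lam
  nlinarith

/-! ### Derivatives -/

noncomputable def lam' (Z : ℝ) : ℝ :=
  Real.exp Z / (Real.exp Z - 1) -
    (2 * Real.exp (2 * Z) + Real.exp Z) / (2 * (Real.exp (2 * Z) + Real.exp Z + 1))

lemma hasDerivAt_exp2 (Z : ℝ) :
    HasDerivAt (fun z : ℝ => Real.exp (2 * z)) (2 * Real.exp (2 * Z)) Z := by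
  have h : HasDerivAt (fun z : ℝ => 2 * z) 2 Z := by
    simpa using (hasDerivAt_id Z).const_mul (2 : ℝ)
  have h3 := (Real.hasDerivAt_exp (2 * Z)).comp Z h
  exact h3.congr_deriv (by ring)

lemma hasDerivAt_D (Z : ℝ) :
    HasDerivAt (fun z : ℝ => Real.exp (2 * z) + Real.exp z + 1)
      (2 * Real.exp (2 * Z) + Real.exp Z) Z :=
  ((hasDerivAt_exp2 Z).add (Real.hasDerivAt_exp Z)).add_const 1

lemma hasDerivAt_lam {Z : ℝ} (hZ : Z ≠ 0) : HasDerivAt lam (lam' Z) Z := by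
  have hu := Real.exp_pos Z
  have h1 : HasDerivAt (fun z : ℝ => Real.exp z - 1) (Real.exp Z) Z :=
    (Real.hasDerivAt_exp Z).sub_const 1
  have hN : HasDerivAt (fun z : ℝ => (Real.exp z - 1) ^ 2)
      (2 * (Real.exp Z - 1) * Real.exp Z) Z := by
    simpa using h1.fun_pow 2
  have hDne := (D_pos Z).ne'
  have hNne := (N_pos hZ).ne'
  have hf := hN.div (hasDerivAt_D Z) hDne
  have hratio_ne : (Real.exp Z - 1) ^ 2 / (Real.exp (2 * Z) + Real.exp Z + 1) ≠ 0 :=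
    div_ne_zero hNne hDne
  have hlog := (hf.log hratio_ne).const_mul (1 / 2 : ℝ)
  have heq : (1 / 2 : ℝ) *
      ((2 * (Real.exp Z - 1) * Real.exp Z * (Real.exp (2 * Z) + Real.exp Z + 1) -
          (Real.exp Z - 1) ^ 2 * (2 * Real.exp (2 * Z) + Real.exp Z)) /
          (Real.exp (2 * Z) + Real.exp Z + 1) ^ 2 /
        ((Real.exp Z - 1) ^ 2 / (Real.exp (2 * Z) + Real.exp Z + 1))) = lam' Z := by
    unfold lam'
    have h2 := exp_sub_one_ne hZ
    field_simp
  rw [← heq]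
  exact hlog

noncomputable def sec (Z : ℝ) : ℝ :=
  (Real.exp Z * (Real.exp Z - 1) - Real.exp Z * Real.exp Z) / (Real.exp Z - 1) ^ 2 -
    ((4 * Real.exp (2 * Z) + Real.exp Z) * (2 * (Real.exp (2 * Z) + Real.exp Z + 1)) -
        (2 * Real.exp (2 * Z) + Real.exp Z) * (2 * (2 * Real.exp (2 * Z) + Real.exp Z))) /
      (2 * (Real.exp (2 * Z) + Real.exp Z + 1)) ^ 2

lemma hasDerivAt_lam' {Z : ℝ} (hZ : Z ≠ 0) : HasDerivAt lam' (sec Z) Z := by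
  have h1 : HasDerivAt (fun z : ℝ => Real.exp z - 1) (Real.exp Z) Z :=
    (Real.hasDerivAt_exp Z).sub_const 1
  have ht1 := (Real.hasDerivAt_exp Z).div h1 (exp_sub_one_ne hZ)
  have hnum2 : HasDerivAt (fun z : ℝ => 2 * Real.exp (2 * z) + Real.exp z)
      (4 * Real.exp (2 * Z) + Real.exp Z) Z := by
    have := ((hasDerivAt_exp2 Z).const_mul (2 : ℝ)).add (Real.hasDerivAt_exp Z)
    exact this.congr_deriv (by ring)
  have hden2 : HasDerivAt (fun z : ℝ => 2 * (Real.exp (2 * z) + Real.exp z + 1))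
      (2 * (2 * Real.exp (2 * Z) + Real.exp Z)) Z := (hasDerivAt_D Z).const_mul 2
  have hden2ne : 2 * (Real.exp (2 * Z) + Real.exp Z + 1) ≠ 0 := by
    have := D_pos Z; positivity
  have ht2 := hnum2.div hden2 hden2ne
  exact ht1.sub ht2

lemma sec_neg {Z : ℝ} (hZ : Z ≠ 0) : sec Z < 0 := by
  have hu := Real.exp_pos Z
  have hv := exp_two_mul' Z
  have hN := N_pos hZ
  have hD := D_pos Z
  have ht1 : (Real.exp Z * (Real.exp Z - 1) - Real.exp Z * Real.exp Z) /
      (Real.exp Z - 1) ^ 2 < 0 := by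
    apply div_neg_of_neg_of_pos _ hN
    nlinarith
  have ht2 : 0 < ((4 * Real.exp (2 * Z) + Real.exp Z) *
        (2 * (Real.exp (2 * Z) + Real.exp Z + 1)) -
        (2 * Real.exp (2 * Z) + Real.exp Z) * (2 * (2 * Real.exp (2 * Z) + Real.exp Z))) /
      (2 * (Real.exp (2 * Z) + Real.exp Z + 1)) ^ 2 := by
    apply div_pos _ (by positivity)
    rw [hv]
    nlinarith
  unfold sec
  linarith

/-! ### Integrability infrastructure -/

lemma ae_ne_zero : ∀ᵐ z : ℝ, z ≠ 0 := by
  have h : (volume : Measure ℝ) {(0 : ℝ)} = 0 := measure_singleton 0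
  exact compl_mem_ae_iff.mpr h

lemma integrable_of_even {f : ℝ → ℝ} (hf : ∀ x, f (-x) = f x)
    (h : IntegrableOn f (Ioi 0)) : Integrable f := by
  have hind : Integrable ((Ioi (0 : ℝ)).indicator f) :=
    h.integrable_indicator measurableSet_Ioi
  have hneg : Integrable (fun x => (Ioi (0 : ℝ)).indicator f (-x)) := hind.comp_neg
  have heq : (fun x => (Ioi (0 : ℝ)).indicator f (-x)) = (Iio (0 : ℝ)).indicator f := by
    funext x
    by_cases hx : x < 0
    · rw [Set.indicator_of_mem (by simpa using hx), Set.indicator_of_mem (by simpa using hx), hf]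
    · rw [Set.indicator_of_notMem (by simpa using hx),
        Set.indicator_of_notMem (by simpa using hx)]
  rw [heq] at hneg
  have hsum := hneg.add hind
  refine hsum.congr ?_
  filter_upwards [ae_ne_zero] with x hx
  rcases lt_or_gt_of_ne hx with h' | h'
  · simp [Set.indicator_of_mem (show x ∈ Iio (0:ℝ) from h'),
      Set.indicator_of_notMem (show x ∉ Ioi (0:ℝ) by simpa using h'.le)]
  · simp [Set.indicator_of_mem (show x ∈ Ioi (0:ℝ) from h'),
      Set.indicator_of_notMem (show x ∉ Iio (0:ℝ) by simpa using h'.le)]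

lemma integrable_exp_neg_abs {b : ℝ} (hb : 0 < b) :
    Integrable (fun x : ℝ => Real.exp (-(b * |x|))) := by
  apply integrable_of_even (fun x => by rw [abs_neg])
  have base : IntegrableOn (fun x : ℝ => Real.exp (-b * x)) (Ioi 0) :=
    exp_neg_integrableOn_Ioi 0 hb
  exact base.congr_fun (fun x hx => by beta_reduce; rw [abs_of_pos (by exact hx), neg_mul]) measurableSet_Ioi

lemma integrableOn_abs_rpow {r : ℝ} (hr : -1 < r) :
    IntegrableOn (fun z : ℝ => |z| ^ r) (Icc (-2 : ℝ) 2) := by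
  rw [← integrable_indicator_iff measurableSet_Icc]
  apply integrable_of_even
  · intro x
    have hmem : -x ∈ Icc (-2 : ℝ) 2 ↔ x ∈ Icc (-2 : ℝ) 2 := by
      simp only [Set.mem_Icc]
      constructor <;> intro ⟨h1, h2⟩ <;> constructor <;> linarith
    by_cases hx : x ∈ Icc (-2 : ℝ) 2
    · rw [Set.indicator_of_mem (hmem.mpr hx), Set.indicator_of_mem hx, abs_neg]
    · rw [Set.indicator_of_notMem (fun h => hx (hmem.mp h)), Set.indicator_of_notMem hx]
  · rw [IntegrableOn, integrable_indicator_iff measurableSet_Icc, IntegrableOn,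
      Measure.restrict_restrict measurableSet_Icc]
    have hset : Icc (-2 : ℝ) 2 ∩ Ioi 0 = Ioc 0 2 := by
      ext x
      simp only [Set.mem_inter_iff, Set.mem_Icc, Set.mem_Ioi, Set.mem_Ioc]
      constructor
      · rintro ⟨⟨h1, h2⟩, h3⟩; exact ⟨h3, h2⟩
      · rintro ⟨h1, h2⟩; exact ⟨⟨by linarith, h2⟩, h1⟩
    rw [hset]
    have base : IntegrableOn (fun x : ℝ => x ^ r) (Ioc (0 : ℝ) 2) :=
      (intervalIntegral.intervalIntegrable_rpow' hr (a := 0) (b := 2)).1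
    exact base.congr_fun (fun x hx => by rw [abs_of_pos hx.1]) measurableSet_Ioc

noncomputable def F (c d b r : ℝ) : ℝ → ℝ := fun x =>
  c * Real.exp (-(b * |x|)) + (Set.Icc (-2 : ℝ) 2).indicator (fun z => d * |z| ^ r) x

lemma F_nonneg {c d b r : ℝ} (hc : 0 ≤ c) (hd : 0 ≤ d) (x : ℝ) : 0 ≤ F c d b r x := by
  unfold F
  apply add_nonneg
  · positivity
  · apply Set.indicator_nonneg
    intro z _
    positivity

lemma integrable_F {c d b r : ℝ} (hb : 0 < b) (hr : -1 < r) : Integrable (F c d b r) := by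
  unfold F
  apply Integrable.add
  · exact (integrable_exp_neg_abs hb).const_mul c
  · rw [integrable_indicator_iff measurableSet_Icc]
    exact (integrableOn_abs_rpow hr).const_mul d

lemma measurable_F (c d b r : ℝ) : Measurable (F c d b r) := by
  unfold F
  apply Measurable.add
  · exact (measurable_exp.comp ((measurable_abs.const_mul b).neg)).const_mul c
  · exact Measurable.indicator ((measurable_abs.pow_const r).const_mul d) measurableSet_Icc

/-! ### Pointwise bounds on `lam` -/

lemma lam_eq {Z : ℝ} (hZ : Z ≠ 0) :
    lam Z = Real.log (Real.exp Z - 1) -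
      (1 / 2) * Real.log (Real.exp (2 * Z) + Real.exp Z + 1) := by
  unfold lam
  rw [Real.log_div (N_pos hZ).ne' (D_pos Z).ne', Real.log_pow]
  push_cast
  ring

lemma rpow_quarter_lb {x : ℝ} (hx0 : 0 < x) (hx2 : x ≤ 2) :
    (1 : ℝ) / 2 ≤ x ^ (-(1 / 4) : ℝ) := by
  have h1 : x ^ ((1 : ℝ) / 4) ≤ 2 ^ ((1 : ℝ) / 4) :=
    Real.rpow_le_rpow hx0.le hx2 (by norm_num)
  have h2 : (2 : ℝ) ^ ((1 : ℝ) / 4) ≤ 2 := by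
    calc (2 : ℝ) ^ ((1 : ℝ) / 4) ≤ 2 ^ (1 : ℝ) :=
          Real.rpow_le_rpow_of_exponent_le one_le_two (by norm_num)
      _ = 2 := Real.rpow_one 2
  have hxq : 0 < x ^ ((1 : ℝ) / 4) := Real.rpow_pos_of_pos hx0 _
  have hrw : x ^ (-(1 / 4) : ℝ) = (x ^ ((1 : ℝ) / 4))⁻¹ := by
    rw [← Real.rpow_neg hx0.le]
  rw [hrw]
  have h3 : (2 : ℝ)⁻¹ ≤ (x ^ ((1 : ℝ) / 4))⁻¹ :=
    inv_anti₀ hxq (h1.trans h2)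
  linarith

lemma abs_log_le {x : ℝ} (hx0 : 0 < x) (hx2 : x ≤ 2) :
    |Real.log x| ≤ 4 * x ^ (-(1 / 4) : ℝ) := by
  have hq := rpow_quarter_lb hx0 hx2
  rcases le_or_gt 1 x with hx1 | hx1
  · rw [abs_of_nonneg (Real.log_nonneg hx1)]
    have := Real.log_le_sub_one_of_pos hx0
    linarith
  · rw [abs_of_nonpos (Real.log_nonpos hx0.le hx1.le)]
    have hqlog : Real.log (x ^ (-(1 / 4) : ℝ)) = -(1 / 4) * Real.log x :=
      Real.log_rpow hx0 _
    have hle : Real.log (x ^ (-(1 / 4) : ℝ)) ≤ x ^ (-(1 / 4) : ℝ) - 1 :=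
      Real.log_le_sub_one_of_pos (Real.rpow_pos_of_pos hx0 _)
    linarith

lemma exp_two_ge_four : (4 : ℝ) ≤ Real.exp 2 := by
  have h := Real.exp_one_gt_d9
  have h2 : Real.exp 2 = Real.exp 1 * Real.exp 1 := by
    rw [← Real.exp_add]; norm_num
  nlinarith

lemma abs_exp_sub_one_lb {Z : ℝ} (h2 : |Z| ≤ 2) :
    Real.exp (-2) * |Z| ≤ |Real.exp Z - 1| := by
  have hem : Real.exp (-2 : ℝ) ≤ 1 := Real.exp_le_one_iff.mpr (by norm_num)
  rcases le_or_gt 0 Z with hZ | hZ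
  · have h1 : Z + 1 ≤ Real.exp Z := Real.add_one_le_exp Z
    rw [abs_of_nonneg hZ, abs_of_nonneg (by linarith)]
    nlinarith [Real.exp_pos (-2 : ℝ)]
  · have habs : |Z| = -Z := abs_of_neg hZ
    have h1 : (-Z) + 1 ≤ Real.exp (-Z) := Real.add_one_le_exp (-Z)
    have h2' : Real.exp (-Z) * Real.exp Z = 1 := by
      rw [← Real.exp_add]; simp
    have h3 : Real.exp (-2 : ℝ) ≤ Real.exp Z := Real.exp_le_exp.2 (by
      rw [habs] at h2; linarith)
    have hu1 : Real.exp Z < 1 := by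
      rw [← Real.exp_zero]; exact Real.exp_lt_exp.2 hZ
    rw [habs, abs_of_nonpos (by linarith)]
    nlinarith [Real.exp_pos Z]

lemma abs_exp_sub_one_ub {Z : ℝ} (h2 : |Z| ≤ 2) :
    |Real.exp Z - 1| ≤ Real.exp 2 := by
  have hZ2 : Z ≤ 2 := (abs_le.1 h2).2
  have hup : Real.exp Z ≤ Real.exp 2 := Real.exp_le_exp.2 hZ2
  have h1 : (0 : ℝ) < Real.exp Z := Real.exp_pos Z
  have h4 := exp_two_ge_four
  rw [abs_le]
  constructor <;> nlinarith

lemma neg_lam_le_small {Z : ℝ} (hZ : Z ≠ 0) (h2 : |Z| ≤ 2) :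
    -lam Z ≤ 5 + |Real.log (|Z|)| := by
  rw [lam_eq hZ]
  have hZl := abs_le.1 h2
  have hDle : Real.exp (2 * Z) + Real.exp Z + 1 ≤ 3 * Real.exp 4 := by
    have h1 : Real.exp (2 * Z) ≤ Real.exp 4 := Real.exp_le_exp.2 (by linarith [hZl.2])
    have h2' : Real.exp Z ≤ Real.exp 4 := Real.exp_le_exp.2 (by linarith [hZl.2])
    have h3 : (1 : ℝ) ≤ Real.exp 4 := Real.one_le_exp (by norm_num)
    linarith
  have hlogD : Real.log (Real.exp (2 * Z) + Real.exp Z + 1) ≤ 6 := by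
    have h1 : Real.log (Real.exp (2 * Z) + Real.exp Z + 1) ≤ Real.log (3 * Real.exp 4) :=
      Real.log_le_log (D_pos Z) hDle
    have h2' : Real.log (3 * Real.exp 4) = Real.log 3 + 4 := by
      rw [Real.log_mul (by norm_num) (Real.exp_ne_zero 4), Real.log_exp]
    have h3 : Real.log 3 ≤ 2 := by
      have := Real.log_le_sub_one_of_pos (show (0:ℝ) < 3 by norm_num)
      linarith
    linarith
  have hNne : Real.exp Z - 1 ≠ 0 := exp_sub_one_ne hZ
  have habs_pos : 0 < |Real.exp Z - 1| := abs_pos.mpr hNne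
  have hlow := abs_exp_sub_one_lb h2
  have hup := abs_exp_sub_one_ub h2
  have hZpos : 0 < |Z| := abs_pos.mpr hZ
  have hlog1 : Real.log (Real.exp Z - 1) = Real.log |Real.exp Z - 1| := (Real.log_abs _).symm
  have hlogup : Real.log |Real.exp Z - 1| ≤ 2 := by
    calc Real.log |Real.exp Z - 1| ≤ Real.log (Real.exp 2) := Real.log_le_log habs_pos hup
      _ = 2 := Real.log_exp 2
  have hloglow : -2 + Real.log |Z| ≤ Real.log |Real.exp Z - 1| := by
    have h1 : Real.log (Real.exp (-2) * |Z|) ≤ Real.log |Real.exp Z - 1| :=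
      Real.log_le_log (by positivity) hlow
    rw [Real.log_mul (Real.exp_ne_zero _) hZpos.ne', Real.log_exp] at h1
    linarith
  have hZlog := neg_abs_le (Real.log |Z|)
  have hZlog' := le_abs_self (Real.log |Z|)
  rw [hlog1]
  have hDlow : -2 * 1 ≤ Real.log (Real.exp (2*Z) + Real.exp Z + 1) := by
    have h0 : (1:ℝ) ≤ Real.exp (2*Z) + Real.exp Z + 1 := by
      nlinarith [Real.exp_pos (2*Z), Real.exp_pos Z]
    have := Real.log_nonneg h0
    linarith
  linarith

lemma neg_lam_le_big {Z : ℝ} (h2 : 2 < |Z|) :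
    -lam Z ≤ 3 * Real.exp (-|Z|) := by
  have hZ : Z ≠ 0 := by
    intro h; rw [h] at h2; simp at h2; linarith
  have hu := Real.exp_pos Z
  have hN := N_pos hZ
  have hD := D_pos Z
  have hDN : Real.exp (2 * Z) + Real.exp Z + 1 = (Real.exp Z - 1) ^ 2 + 3 * Real.exp Z := by
    rw [exp_two_mul']; ring
  have hlam : -lam Z = (1 / 2) * Real.log
      ((Real.exp (2 * Z) + Real.exp Z + 1) / (Real.exp Z - 1) ^ 2) := by
    unfold lam
    rw [Real.log_div hN.ne' hD.ne', Real.log_div hD.ne' hN.ne']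
    ring
  rw [hlam]
  have hratio : (Real.exp (2 * Z) + Real.exp Z + 1) / (Real.exp Z - 1) ^ 2 =
      1 + 3 * Real.exp Z / (Real.exp Z - 1) ^ 2 := by
    rw [hDN, add_div, div_self hN.ne']
  rw [hratio]
  have hpos : (0 : ℝ) < 1 + 3 * Real.exp Z / (Real.exp Z - 1) ^ 2 := by positivity
  have hlog := Real.log_le_sub_one_of_pos hpos
  have hkey : Real.exp |Z| * Real.exp Z ≤ 2 * (Real.exp Z - 1) ^ 2 := by
    have h4 := exp_two_ge_four
    rcases abs_cases Z with ⟨hE, hge⟩ | ⟨hE, hlt⟩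
    · rw [hE]
      have hu4 : (4 : ℝ) ≤ Real.exp Z := by
        have := Real.exp_le_exp.2 (show (2:ℝ) ≤ Z by rw [hE] at h2; linarith)
        linarith
      nlinarith
    · rw [hE]
      have h1 : Real.exp (-Z) * Real.exp Z = 1 := by rw [← Real.exp_add]; simp
      have hZlt : Z < -2 := by rw [hE] at h2; linarith
      have hule : Real.exp Z ≤ Real.exp (-2 : ℝ) := Real.exp_le_exp.2 (by linarith)
      have hinv : Real.exp (-2 : ℝ) ≤ 1 / 4 := by
        rw [Real.exp_neg]
        rw [inv_le_comm₀ (Real.exp_pos 2) (by norm_num)] at *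
        · linarith
      nlinarith
  have hdiv : 3 * Real.exp Z / (Real.exp Z - 1) ^ 2 ≤ 6 * Real.exp (-|Z|) := by
    rw [div_le_iff₀ hN]
    have hexp1 : Real.exp (-|Z|) * Real.exp |Z| = 1 := by rw [← Real.exp_add]; simp
    nlinarith [Real.exp_pos (-|Z|), Real.exp_pos |Z|]
  linarith

lemma abs_lam_le {Z : ℝ} (hZ : Z ≠ 0) : |lam Z| ≤ F 3 14 1 (-(1/4)) Z := by
  have hneg := lam_neg hZ
  rw [abs_of_neg hneg]
  unfold F
  rcases le_or_gt |Z| 2 with h2 | h2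
  · have hmem : Z ∈ Icc (-2:ℝ) 2 := by rw [Set.mem_Icc]; exact abs_le.1 h2
    rw [Set.indicator_of_mem hmem]
    have hb1 := neg_lam_le_small hZ h2
    have hb2 := abs_log_le (abs_pos.mpr hZ) h2
    have hb3 := rpow_quarter_lb (abs_pos.mpr hZ) h2
    have hexp : 0 < Real.exp (-(1*|Z|)) := Real.exp_pos _
    linarith
  · have hnm : Z ∉ Icc (-2:ℝ) 2 := by
      rw [Set.mem_Icc]
      rintro ⟨ha, hb⟩
      have := abs_le.2 ⟨ha, hb⟩
      linarith
    rw [Set.indicator_of_notMem hnm]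
    have := neg_lam_le_big h2
    rw [one_mul, add_zero]
    exact this

lemma F_sq_le (x : ℝ) : (F 3 14 1 (-(1/4)) x) ^ 2 ≤ F 18 392 2 (-(1/2)) x := by
  unfold F
  have hexp : 0 < Real.exp (-(1*|x|)) := Real.exp_pos _
  have he2 : Real.exp (-(2*|x|)) = Real.exp (-(1*|x|)) * Real.exp (-(1*|x|)) := by
    rw [← Real.exp_add]; ring_nf
  by_cases hx : x ∈ Icc (-2:ℝ) 2
  · rw [Set.indicator_of_mem hx, Set.indicator_of_mem hx]
    have ha2 : (|x| ^ (-(1/4) : ℝ)) ^ (2:ℕ) = |x| ^ (-(1/2) : ℝ) := by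
      rw [← Real.rpow_natCast (|x| ^ (-(1/4):ℝ)) 2, ← Real.rpow_mul (abs_nonneg x)]
      norm_num
    have hrp : (0:ℝ) ≤ |x| ^ (-(1/4):ℝ) := Real.rpow_nonneg (abs_nonneg x) _
    rw [he2]
    nlinarith [sq_nonneg (3 * Real.exp (-(1*|x|)) - 14 * |x| ^ (-(1/4):ℝ))]
  · rw [Set.indicator_of_notMem hx, Set.indicator_of_notMem hx]
    rw [he2]
    nlinarith

lemma measurable_lam : Measurable lam := by
  apply Measurable.const_mul
  apply Real.measurable_log.comp
  apply Measurable.div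
  · exact (Real.measurable_exp.sub measurable_const).pow_const 2
  · exact ((Real.measurable_exp.comp (measurable_id.const_mul 2)).add
      Real.measurable_exp).add_const 1

end Conifold

/-- (i) `λ(Z) < 0` for every real `Z ≠ 0`; (ii) `λ''(Z) < 0` for every
real `Z ≠ 0`; (iii) `λ` is Lebesgue-integrable and square-integrable on `ℝ`. -/
theorem conifold_stmt6 :
    (∀ Z : ℝ, Z ≠ 0 → lam Z < 0) ∧
    (∀ Z : ℝ, Z ≠ 0 → deriv (deriv lam) Z < 0) ∧
    Integrable lam volume ∧
    MemLp lam 2 volume := by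
  refine ⟨fun Z hZ => Conifold.lam_neg hZ, fun Z hZ => ?_, ?_, ?_⟩
  · have hmem : Z ∈ ({(0:ℝ)}ᶜ : Set ℝ) := by simpa using hZ
    have hev : deriv lam =ᶠ[nhds Z] Conifold.lam' := by
      filter_upwards [IsOpen.mem_nhds isOpen_compl_singleton hmem] with x hx
      exact (Conifold.hasDerivAt_lam (by simpa using hx)).deriv
    rw [hev.deriv_eq, (Conifold.hasDerivAt_lam' hZ).deriv]
    exact Conifold.sec_neg hZ
  · refine (Conifold.integrable_F (c := 3) (d := 14) one_pos
      (by norm_num : (-1:ℝ) < -(1/4))).mono'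
      Conifold.measurable_lam.aestronglyMeasurable ?_
    filter_upwards [Conifold.ae_ne_zero] with z hz
    rw [Real.norm_eq_abs]
    exact Conifold.abs_lam_le hz
  · have hF : MemLp (Conifold.F 3 14 1 (-(1/4))) 2 volume := by
      rw [memLp_two_iff_integrable_sq (Conifold.measurable_F 3 14 1
        (-(1/4))).aestronglyMeasurable]
      refine (Conifold.integrable_F (c := 18) (d := 392) two_pos
        (by norm_num : (-1:ℝ) < -(1/2))).mono'
        (((Conifold.measurable_F 3 14 1 (-(1/4))).pow_const 2).aestronglyMeasurable) ?_
      filter_upwards with x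
      rw [Real.norm_eq_abs, abs_of_nonneg (sq_nonneg _)]
      exact Conifold.F_sq_le x
    refine hF.of_le Conifold.measurable_lam.aestronglyMeasurable ?_
    filter_upwards [Conifold.ae_ne_zero] with z hz
    rw [Real.norm_eq_abs, Real.norm_eq_abs,
      abs_of_nonneg (Conifold.F_nonneg (by norm_num) (by norm_num) z)]
    exact Conifold.abs_lam_le hz
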